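/- Let p and q be even, and let λ be a partition of p + q in which every part occurs with even multiplicity; assume λ has distinct column lengths, let 0 = k_0 < k_1 < ⋯ < k_m be the column lengths of λ listed increasingly, and set d = (p − q + #(odd parts of λ))/2 (d is an even integer whenever syd_CII(λ;p,q) ≠ ∅, and each difference k_s − k_{s−1} is even). Then the number of connected components of Γ_CII(λ;p,q) equals #syd_CII(λ;p,q) (the graph has no edges) and equals the coefficient of t^{d/2} in ∏_{1 ≤ s ≤ m, λ_{k_s} odd} (1 + t + ⋯ + t^{(k_s − k_{s−1})/2}), the coefficient being taken to be 0 if d/2 is not a nonnegative integer. -/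

import Mathlib

/-
In type CII the coordinates `m⁺(i)` of the even parts `i` are pinned to `m(i)/2`. Distinct column
lengths force consecutive distinct parts to differ by one, so every move `±2(e_r - e_{r+1})`
changes a pinned coordinate, and a move `±2e_k` at an odd smallest part changes
`p - q + #(odd parts) = 2 ∑_{i odd} m⁺(i)`: the graph has no edges. By the same identity a CII
diagram amounts to a choice of `m⁺(i)/2 ∈ [0, m(i)/2]` for the odd parts `i`, with sum `d/2`;
as `m(λ_{k_s}) = k_s - k_{s-1}`, these choices are counted by the stated coefficient.
-/

open Finset

/-- A partition of `n`, given by the function `l` listing its parts in weakly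
decreasing order: `l j = λ_j` is the `j`-th part for `1 ≤ j ≤ len`, and
`l j = 0` for `j > len`. -/
structure PartitionData : Type where
  l : ℕ → ℕ
  len : ℕ
  anti : ∀ j, 1 ≤ j → l (j + 1) ≤ l j
  pos : ∀ j, 1 ≤ j → (0 < l j ↔ j ≤ len)

namespace PartitionData

/-- The multiplicity `m(i)` of `i` as a part of the partition. -/
def mult (P : PartitionData) (i : ℕ) : ℕ :=
  ((Finset.Icc 1 P.len).filter (fun j => P.l j = i)).card

/-- The finite set of (distinct) parts of the partition. -/
def partsSet (P : PartitionData) : Finset ℕ :=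
  (Finset.Icc 1 P.len).image P.l

/-- The sum of the parts (i.e. the number `n` the partition partitions). -/
def boxSum (P : PartitionData) : ℕ := ∑ j ∈ Finset.Icc 1 P.len, P.l j

/-- The number of odd parts of the partition. -/
def oddCount (P : PartitionData) : ℕ :=
  ((Finset.Icc 1 P.len).filter (fun j => Odd (P.l j))).card

end PartitionData

/-- A signed Young diagram of shape `P` and signature `(p, q)`, encoded by the
function `f` sending each part length `i` to `m_T⁺(i)`, the number of rows of
length `i` whose leading sign is `+`.  A row of length `i` with leading sign
`+` has `(i+1)/2` plus-boxes and `i/2` minus-boxes, and vice versa. -/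
structure SYD (P : PartitionData) (p q : ℕ) : Type where
  f : ℕ → ℕ
  le_mult : ∀ i, f i ≤ P.mult i
  plus_eq : ∑ i ∈ P.partsSet, (f i * ((i + 1) / 2) + (P.mult i - f i) * (i / 2)) = p
  minus_eq : ∑ i ∈ P.partsSet, (f i * (i / 2) + (P.mult i - f i) * ((i + 1) / 2)) = q

/-- `i` and `j` are consecutive distinct parts: `i > j` with no part strictly
in between (so if the distinct parts are `i_1 > ⋯ > i_k`, the pairs are
`(i_r, i_{r+1})`). -/
def Consec (P : PartitionData) (i j : ℕ) : Prop :=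
  i ∈ P.partsSet ∧ j ∈ P.partsSet ∧ j < i ∧ ∀ x ∈ P.partsSet, ¬ (j < x ∧ x < i)

/-- `j` is the smallest part `i_k`. -/
def IsMinPart (P : PartitionData) (j : ℕ) : Prop :=
  j ∈ P.partsSet ∧ ∀ x ∈ P.partsSet, j ≤ x

/-- Adjacency of signed Young diagrams with step `c`:
`π(T) - π(T') ∈ {±c(e_r - e_{r+1})} ∪ {±c e_k}` in the coordinates indexed by
the distinct parts `i_1 > ⋯ > i_k`. -/
def AdjRel (P : PartitionData) {p q : ℕ} (c : ℕ) (T T' : SYD P p q) : Prop :=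
  (∃ i j, Consec P i j ∧ (∀ x, x ≠ i → x ≠ j → T.f x = T'.f x) ∧
    ((T.f i = T'.f i + c ∧ T'.f j = T.f j + c) ∨
      (T'.f i = T.f i + c ∧ T.f j = T'.f j + c)))
  ∨ (∃ j, IsMinPart P j ∧ (∀ x, x ≠ j → T.f x = T'.f x) ∧
      (T.f j = T'.f j + c ∨ T'.f j = T.f j + c))

/-- The orbit graph `Γ(λ;p,q)` (type AIII). -/
def orbitGraph (P : PartitionData) (p q : ℕ) : SimpleGraph (SYD P p q) :=
  SimpleGraph.fromRel (AdjRel P 1)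

/-- Type BDI: `m_T⁺(i) = m(i)/2` for every even part length `i`. -/
def SYD.IsBDI {P : PartitionData} {p q : ℕ} (T : SYD P p q) : Prop :=
  ∀ i, Even i → 2 * T.f i = P.mult i

/-- Type CI: `p = q` and `m_T⁺(i) = m(i)/2` for every odd part length `i`. -/
def SYD.IsCI {P : PartitionData} {p q : ℕ} (T : SYD P p q) : Prop :=
  p = q ∧ ∀ i, Odd i → 2 * T.f i = P.mult i

/-- Type CII: `p`, `q` even, `m_T⁺(i) = m(i)/2` for every even part length `i`,
and `m(i)`, `m_T⁺(i)` even for every odd part length `i`. -/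
def SYD.IsCII {P : PartitionData} {p q : ℕ} (T : SYD P p q) : Prop :=
  Even p ∧ Even q ∧ (∀ i, Even i → 2 * T.f i = P.mult i) ∧
    ∀ i, Odd i → Even (P.mult i) ∧ Even (T.f i)

/-- Type DIII: `p = q`, `m_T⁺(i) = m(i)/2` for every odd part length `i`, and
`m(i)`, `m_T⁺(i)` even for every even part length `i`. -/
def SYD.IsDIII {P : PartitionData} {p q : ℕ} (T : SYD P p q) : Prop :=
  p = q ∧ (∀ i, Odd i → 2 * T.f i = P.mult i) ∧
    ∀ i, Even i → Even (P.mult i) ∧ Even (T.f i)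

/-- The orbit graph `Γ_X(λ;p,q)` on the vertices `syd_X(λ;p,q)` (given by the
predicate `Pr`), with step `c` (`c = 1` for X = BDI, CI and `c = 2` for
X = CII, DIII). -/
def orbitGraphX (P : PartitionData) (p q c : ℕ) (Pr : SYD P p q → Prop) :
    SimpleGraph {T : SYD P p q // Pr T} :=
  SimpleGraph.fromRel (fun T T' => AdjRel P c T.1 T'.1)

/-- The set of column lengths of `λ`: those `h ≥ 1` with `λ_h - λ_{h+1} > 0`. -/
def colSet (P : PartitionData) : Finset ℕ :=
  (Finset.Icc 1 P.len).filter (fun h => P.l (h + 1) < P.l h)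

open Polynomial in
theorem coeff_prod_sum_range_X_pow {R ι : Type*} [CommSemiring R] [DecidableEq ι]
    (s : Finset ι) (b : ι → ℕ) (n : ℕ) :
    (∏ i ∈ s, ∑ j ∈ range (b i + 1), (X : R[X]) ^ j).coeff n =
      #{l ∈ s.finsuppAntidiag n | ∀ i ∈ s, l i ≤ b i} := by
  rw [← Polynomial.coeff_coe, ← coeToPowerSeries.ringHom_apply, map_prod,
    PowerSeries.coeff_prod, card_filter, Nat.cast_sum]
  refine sum_congr rfl fun l _ => ?_
  simp only [map_sum, map_pow, coeToPowerSeries.ringHom_apply, coe_X,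
    PowerSeries.coeff_X_pow, sum_ite_eq, mem_range, Nat.lt_succ_iff]
  rw [prod_boole, Nat.cast_ite, Nat.cast_one, Nat.cast_zero]

theorem SimpleGraph.card_connectedComponent_bot {V : Type*} :
    Nat.card (⊥ : SimpleGraph V).ConnectedComponent = Nat.card V :=
  (Nat.card_eq_of_bijective _ ⟨fun _ _ h => SimpleGraph.reachable_bot.mp
    (SimpleGraph.ConnectedComponent.exact h), fun c => c.exists_rep⟩).symm

namespace PartitionData

variable (P : PartitionData)

theorem l_le_l_of_le {a b : ℕ} (ha : 1 ≤ a) (hab : a ≤ b) : P.l b ≤ P.l a := by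
  induction b, hab using Nat.le_induction with
  | base => exact le_rfl
  | succ b hab ih => exact (P.anti b (ha.trans hab)).trans ih

theorem l_eq_zero {j : ℕ} (hj : P.len < j) : P.l j = 0 :=
  Nat.eq_zero_of_not_pos fun h => by have := (P.pos j (by omega)).mp h; omega

theorem mult_eq_zero {i : ℕ} (hi : i ∉ P.partsSet) : P.mult i = 0 :=
  card_eq_zero.mpr <| filter_eq_empty_iff.mpr fun j hj hji => hi (mem_image.mpr ⟨j, hj, hji⟩)

theorem sum_partsSet_mult_smul {M : Type*} [AddCommMonoid M] (g : ℕ → M) :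
    ∑ i ∈ P.partsSet, P.mult i • g i = ∑ j ∈ Icc 1 P.len, g (P.l j) := by
  rw [← sum_fiberwise_of_maps_to (g := P.l) (t := P.partsSet) fun j hj => mem_image_of_mem _ hj]
  refine sum_congr rfl fun i _ => ?_
  rw [mult, ← sum_const]
  exact sum_congr rfl fun j hj => by rw [(mem_filter.mp hj).2]

theorem sum_partsSet_mult_mul : ∑ i ∈ P.partsSet, P.mult i * i = P.boxSum :=
  P.sum_partsSet_mult_smul id

def oddParts : Finset ℕ := {i ∈ P.partsSet | Odd i}

theorem sum_oddParts_mult : ∑ i ∈ P.oddParts, P.mult i = P.oddCount := by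
  have := P.sum_partsSet_mult_smul fun i => if Odd i then 1 else 0
  simp only [smul_eq_mul, mul_boole, ← sum_filter] at this
  rw [oddParts, this, oddCount, card_eq_sum_ones]

section Boxes

def plusBoxes (f : ℕ → ℕ) : ℕ :=
  ∑ i ∈ P.partsSet, (f i * ((i + 1) / 2) + (P.mult i - f i) * (i / 2))

def minusBoxes (f : ℕ → ℕ) : ℕ :=
  ∑ i ∈ P.partsSet, (f i * (i / 2) + (P.mult i - f i) * ((i + 1) / 2))

variable {P} {f : ℕ → ℕ}

theorem plusBoxes_add_minusBoxes (hf : ∀ i, f i ≤ P.mult i) :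
    P.plusBoxes f + P.minusBoxes f = P.boxSum := by
  rw [plusBoxes, minusBoxes, ← sum_add_distrib, ← P.sum_partsSet_mult_mul]
  refine sum_congr rfl fun i _ => ?_
  have hrow : (i + 1) / 2 + i / 2 = i := by omega
  zify [hf i] at hrow ⊢
  linear_combination (P.mult i : ℤ) * hrow

theorem plusBoxes_sub_minusBoxes (hf : ∀ i, f i ≤ P.mult i) :
    (P.plusBoxes f : ℤ) - P.minusBoxes f + P.oddCount =
      2 * ∑ i ∈ P.oddParts, (f i : ℤ) := by
  rw [← P.sum_oddParts_mult, plusBoxes, minusBoxes, oddParts, Nat.cast_sum, Nat.cast_sum,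
    Nat.cast_sum, ← sum_sub_distrib, sum_filter, sum_filter, ← sum_add_distrib, mul_sum]
  refine sum_congr rfl fun i _ => ?_
  have := hf i
  rcases Nat.even_or_odd' i with ⟨c, rfl | rfl⟩
  · have heven := Nat.not_odd_iff_even.mpr (even_two_mul c)
    rw [if_neg heven, if_neg heven, show (2 * c + 1) / 2 = c by omega]
    simp
  · rw [if_pos (odd_two_mul_add_one c), if_pos (odd_two_mul_add_one c),
      show (2 * c + 1 + 1) / 2 = c + 1 by omega, show (2 * c + 1) / 2 = c by omega]
    push_cast [this]
    ring

end Boxes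

def HasDistinctColumnLengths : Prop := ∀ j, 1 ≤ j → P.l j - P.l (j + 1) ≤ 1

theorem exists_l_eq_of_le_of_le {a b v : ℕ} (hdist : P.HasDistinctColumnLengths)
    (ha : 1 ≤ a) (hab : a ≤ b) (hbv : P.l b ≤ v) (hva : v ≤ P.l a) :
    ∃ c, a ≤ c ∧ c ≤ b ∧ P.l c = v := by
  induction b, hab using Nat.le_induction with
  | base => exact ⟨a, le_rfl, le_rfl, by omega⟩
  | succ b hab ih =>
    by_cases hb : P.l b ≤ v
    · obtain ⟨c, hac, hcb, hc⟩ := ih hb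
      exact ⟨c, hac, hcb.trans b.le_succ, hc⟩
    · have := hdist b (ha.trans hab)
      exact ⟨b + 1, hab.trans b.le_succ, le_rfl, by omega⟩

theorem _root_.Consec.eq_succ {P : PartitionData} (hdist : P.HasDistinctColumnLengths)
    {i j : ℕ} (h : Consec P i j) : i = j + 1 := by
  obtain ⟨hi, hj, hji, hbetween⟩ := h
  obtain ⟨a, ha, rfl⟩ := mem_image.mp hi
  obtain ⟨b, hb, rfl⟩ := mem_image.mp hj
  rw [mem_Icc] at ha hb
  have hab : a ≤ b := by
    by_contra! hba
    exact absurd (P.l_le_l_of_le hb.1 hba.le) (not_le.mpr hji)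
  obtain ⟨c, hac, hcb, hc⟩ := P.exists_l_eq_of_le_of_le hdist ha.1 hab (by omega) (Nat.sub_le _ 1)
  have := hbetween (P.l c) (mem_image_of_mem _ (mem_Icc.mpr ⟨by omega, by omega⟩))
  omega

theorem l_succ_eq {h : ℕ} (hh : 1 ≤ h) (hcol : h ∉ colSet P) : P.l (h + 1) = P.l h := by
  by_cases hlen : h ≤ P.len
  · have : ¬ P.l (h + 1) < P.l h := fun hlt =>
      hcol (mem_filter.mpr ⟨mem_Icc.mpr ⟨hh, hlen⟩, hlt⟩)
    exact le_antisymm (P.anti h hh) (not_lt.mp this)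
  · rw [P.l_eq_zero (by omega), P.l_eq_zero (by omega)]

theorem l_eq_of_forall_not_mem_colSet {a b : ℕ} (ha : 1 ≤ a) (hab : a ≤ b)
    (hcol : ∀ c ∈ Ico a b, c ∉ colSet P) : P.l b = P.l a := by
  induction b, hab using Nat.le_induction with
  | base => rfl
  | succ b hab ih =>
    rw [P.l_succ_eq (ha.trans hab) (hcol b (mem_Ico.mpr ⟨hab, b.lt_succ_self⟩))]
    exact ih fun c hc => hcol c (by rw [mem_Ico] at hc ⊢; omega)

theorem exists_mem_colSet_l_eq {j : ℕ} (hj : 1 ≤ j) (hjlen : j ≤ P.len) :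
    ∃ c ∈ colSet P, P.l j = P.l c := by
  have hne : ({c ∈ colSet P | j ≤ c}).Nonempty := by
    refine ⟨P.len,
      mem_filter.mpr ⟨mem_filter.mpr ⟨mem_Icc.mpr ⟨hj.trans hjlen, le_rfl⟩, ?_⟩, hjlen⟩⟩
    rw [P.l_eq_zero P.len.lt_succ_self]
    exact (P.pos _ (hj.trans hjlen)).mpr le_rfl
  set c := ({c ∈ colSet P | j ≤ c}).min' hne
  obtain ⟨hc, hjc⟩ := mem_filter.mp (min'_mem _ hne)
  refine ⟨c, hc, (P.l_eq_of_forall_not_mem_colSet hj hjc fun c' hc' hc'col => ?_).symm⟩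
  rw [mem_Ico] at hc'
  exact absurd (min'_le _ c' (mem_filter.mpr ⟨hc'col, hc'.1⟩)) (not_le.mpr hc'.2)

end PartitionData

structure IsColumnSeq (P : PartitionData) (m : ℕ) (k : ℕ → ℕ) : Prop where
  zero : k 0 = 0
  strictMonoOn : StrictMonoOn k (Set.Icc 0 m)
  image_eq : (Icc 1 m).image k = colSet P

namespace IsColumnSeq

variable {P : PartitionData} {m : ℕ} {k : ℕ → ℕ}

theorem mem_colSet (hk : IsColumnSeq P m k) {s : ℕ} (hs : s ∈ Icc 1 m) : k s ∈ colSet P :=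
  hk.image_eq ▸ mem_image_of_mem k hs

theorem one_le_k (hk : IsColumnSeq P m k) {s : ℕ} (hs : s ∈ Icc 1 m) : 1 ≤ k s :=
  (mem_Icc.mp (mem_filter.mp (hk.mem_colSet hs)).1).1

theorem k_le_len (hk : IsColumnSeq P m k) {s : ℕ} (hs : s ∈ Icc 1 m) : k s ≤ P.len :=
  (mem_Icc.mp (mem_filter.mp (hk.mem_colSet hs)).1).2

theorem lt_iff_lt (hk : IsColumnSeq P m k) {s s' : ℕ} (hs : s ≤ m) (hs' : s' ≤ m) :
    k s < k s' ↔ s < s' :=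
  hk.strictMonoOn.lt_iff_lt ⟨s.zero_le, hs⟩ ⟨s'.zero_le, hs'⟩

theorem l_k_lt (hk : IsColumnSeq P m k) {s s' : ℕ} (hs : 1 ≤ s) (hss' : s < s')
    (hs' : s' ≤ m) :
    P.l (k s') < P.l (k s) := by
  have hdrop := (mem_filter.mp (hk.mem_colSet (mem_Icc.mpr ⟨hs, by omega⟩))).2
  have hlt := (hk.lt_iff_lt (by omega) hs').mpr hss'
  exact (P.l_le_l_of_le (by omega) hlt).trans_lt hdrop

theorem injOn_l_k (hk : IsColumnSeq P m k) : Set.InjOn (fun s => P.l (k s)) (Icc 1 m) := by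
  intro s hs s' hs' h
  simp only [coe_Icc, Set.mem_Icc] at hs hs'
  rcases lt_trichotomy s s' with hlt | heq | hlt
  · exact absurd h (hk.l_k_lt hs.1 hlt hs'.2).ne'
  · exact heq
  · exact absurd h (hk.l_k_lt hs'.1 hlt hs.2).ne

theorem l_eq_l_k (hk : IsColumnSeq P m k) {s j : ℕ} (hs : s ∈ Icc 1 m)
    (hj : j ∈ Ioc (k (s - 1)) (k s)) :
    P.l j = P.l (k s) := by
  rw [mem_Icc] at hs
  rw [mem_Ioc] at hj
  refine (P.l_eq_of_forall_not_mem_colSet (by omega) hj.2 fun c hc hcol => ?_).symm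
  rw [← hk.image_eq] at hcol
  obtain ⟨s', hs', rfl⟩ := mem_image.mp hcol
  rw [mem_Icc] at hs'
  rw [mem_Ico] at hc
  have h1 := (hk.lt_iff_lt (s := s - 1) (by omega) hs'.2).mp (by omega)
  have h2 := (hk.lt_iff_lt hs'.2 hs.2).mp (by omega)
  omega

theorem partsSet_eq_image (hk : IsColumnSeq P m k) :
    P.partsSet = (Icc 1 m).image fun s => P.l (k s) := by
  ext i
  constructor
  · intro hi
    obtain ⟨j, hj, rfl⟩ := mem_image.mp hi
    rw [mem_Icc] at hj
    obtain ⟨c, hc, hjc⟩ := P.exists_mem_colSet_l_eq hj.1 hj.2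
    rw [← hk.image_eq] at hc
    obtain ⟨s, hs, rfl⟩ := mem_image.mp hc
    exact mem_image.mpr ⟨s, hs, hjc.symm⟩
  · intro hi
    obtain ⟨s, hs, rfl⟩ := mem_image.mp hi
    exact mem_image_of_mem _ (mem_Icc.mpr ⟨hk.one_le_k hs, hk.k_le_len hs⟩)

theorem mult_l_k (hk : IsColumnSeq P m k) {s : ℕ} (hs : s ∈ Icc 1 m) :
    P.mult (P.l (k s)) = k s - k (s - 1) := by
  suffices {j ∈ Icc 1 P.len | P.l j = P.l (k s)} = Ioc (k (s - 1)) (k s) by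
    rw [PartitionData.mult, this, Nat.card_Ioc]
  have hs' := mem_Icc.mp hs
  ext j
  simp only [mem_filter, mem_Icc, mem_Ioc]
  constructor
  · rintro ⟨hj, hjs⟩
    constructor
    · by_contra! hle
      have hs1 : 2 ≤ s := by
        by_contra
        rw [show s - 1 = 0 by omega, hk.zero] at hle
        omega
      have := P.l_le_l_of_le hj.1 hle
      have := hk.l_k_lt (s := s - 1) (by omega) (by omega) hs'.2
      omega
    · by_contra! hlt
      have hdrop := (mem_filter.mp (hk.mem_colSet hs)).2
      have := P.l_le_l_of_le (a := k s + 1) (by omega) hlt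
      omega
  · intro hj
    have := hk.k_le_len hs
    exact ⟨⟨by omega, by omega⟩, hk.l_eq_l_k hs (mem_Ioc.mpr hj)⟩

theorem prod_oddParts (hk : IsColumnSeq P m k) {M : Type*} [CommMonoid M] (g : ℕ → ℕ → M) :
    ∏ s ∈ Icc 1 m with Odd (P.l (k s)), g (P.l (k s)) (k s - k (s - 1)) =
      ∏ i ∈ P.oddParts, g i (P.mult i) := by
  rw [PartitionData.oddParts, hk.partsSet_eq_image, filter_image,
    prod_image fun s hs s' hs' => hk.injOn_l_k (mem_filter.mp hs).1 (mem_filter.mp hs').1]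
  exact prod_congr rfl fun s hs => by rw [hk.mult_l_k (mem_filter.mp hs).1]

end IsColumnSeq

namespace SYD

variable {P : PartitionData} {p q : ℕ}

theorem ext {T T' : SYD P p q} (h : T.f = T'.f) : T = T' := by
  cases T; cases T'; cases h; rfl

theorem f_eq_zero (T : SYD P p q) {i : ℕ} (hi : i ∉ P.partsSet) : T.f i = 0 :=
  Nat.eq_zero_of_le_zero (P.mult_eq_zero hi ▸ T.le_mult i)

theorem sub_add_oddCount (T : SYD P p q) :
    (p : ℤ) - q + P.oddCount = 2 * ∑ i ∈ P.oddParts, (T.f i : ℤ) := by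
  have := P.plusBoxes_sub_minusBoxes T.le_mult
  rwa [show P.plusBoxes T.f = p from T.plus_eq, show P.minusBoxes T.f = q from T.minus_eq] at this

theorem sum_oddParts_eq (T T' : SYD P p q) :
    ∑ i ∈ P.oddParts, T.f i = ∑ i ∈ P.oddParts, T'.f i := by
  have := T.sub_add_oddCount.symm.trans T'.sub_add_oddCount
  exact_mod_cast mul_left_cancel₀ two_ne_zero this

def ofOddParts (f : ℕ → ℕ) (hf : ∀ i, f i ≤ P.mult i) (hbox : P.boxSum = p + q)
    (hodd : (p : ℤ) - q + P.oddCount = 2 * ∑ i ∈ P.oddParts, (f i : ℤ)) : SYD P p q where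
  f := f
  le_mult := hf
  plus_eq := by
    have := P.plusBoxes_add_minusBoxes hf
    have := P.plusBoxes_sub_minusBoxes hf
    show P.plusBoxes f = p
    omega
  minus_eq := by
    have := P.plusBoxes_add_minusBoxes hf
    have := P.plusBoxes_sub_minusBoxes hf
    show P.minusBoxes f = q
    omega

theorem IsCII.f_eq {T T' : SYD P p q} (hT : T.IsCII) (hT' : T'.IsCII) {i : ℕ} (hi : Even i) :
    T.f i = T'.f i := by
  have := hT.2.2.1 i hi
  have := hT'.2.2.1 i hi
  omega

theorem IsCII.sub_add_oddCount {T : SYD P p q} (hT : T.IsCII) :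
    (p : ℤ) - q + P.oddCount = 4 * ∑ i ∈ P.oddParts, ((T.f i / 2 : ℕ) : ℤ) := by
  rw [T.sub_add_oddCount, mul_sum, mul_sum]
  refine sum_congr rfl fun i hi => ?_
  obtain ⟨c, hc⟩ := (hT.2.2.2 i (mem_filter.mp hi).2).2
  rw [hc, show (c + c) / 2 = c by omega]
  push_cast
  ring

theorem IsCII.not_adjRel (hdist : P.HasDistinctColumnLengths) {T T' : SYD P p q}
    (hT : T.IsCII) (hT' : T'.IsCII) : ¬ AdjRel P 2 T T' := by
  rintro (⟨i, j, hij, -, hmove⟩ | ⟨j, hmin, hother, hmove⟩)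
  · -- consecutive parts differ by one, so one of the two moved coordinates is pinned
    rcases Nat.even_or_odd j with hj | hj
    · have := hT.f_eq hT' hj
      omega
    · have := hT.f_eq hT' (Consec.eq_succ hdist hij ▸ hj.add_one)
      omega
  · rcases Nat.even_or_odd j with hj | hj
    · have := hT.f_eq hT' hj
      omega
    · -- `p` and `q` determine `∑ m⁺(i)` over the odd parts `i`
      have hjodd : j ∈ P.oddParts := mem_filter.mpr ⟨hmin.1, hj⟩
      have hrest : ∑ x ∈ P.oddParts.erase j, T.f x = ∑ x ∈ P.oddParts.erase j, T'.f x :=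
        sum_congr rfl fun x hx => hother x (ne_of_mem_erase hx)
      have := T.sum_oddParts_eq T'
      rw [← add_sum_erase _ _ hjodd, ← add_sum_erase _ _ hjodd, hrest] at this
      omega

noncomputable def halfOddParts (T : SYD P p q) : ℕ →₀ ℕ :=
  Finsupp.onFinset P.oddParts (fun i => if i ∈ P.oddParts then T.f i / 2 else 0)
    fun i hi => by by_contra h; exact hi (if_neg h)

theorem halfOddParts_apply (T : SYD P p q) {i : ℕ} (hi : i ∈ P.oddParts) :
    T.halfOddParts i = T.f i / 2 := if_pos hi

theorem IsCII.halfOddParts_mem {N : ℕ} {T : SYD P p q} (hT : T.IsCII)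
    (hN : (p : ℤ) - q + P.oddCount = 4 * N) :
    T.halfOddParts ∈
      {l ∈ P.oddParts.finsuppAntidiag N | ∀ i ∈ P.oddParts, l i ≤ P.mult i / 2} := by
  refine mem_filter.mpr ⟨mem_finsuppAntidiag.mpr ⟨?_, Finsupp.support_onFinset_subset⟩,
    fun i hi => ?_⟩
  · rw [hT.sub_add_oddCount] at hN
    rw [sum_congr rfl fun i hi => T.halfOddParts_apply hi]
    exact_mod_cast mul_left_cancel₀ four_ne_zero hN
  · rw [T.halfOddParts_apply hi]
    exact Nat.div_le_div_right (T.le_mult i)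

theorem IsCII.eq_of_halfOddParts_eq {T T' : SYD P p q} (hT : T.IsCII) (hT' : T'.IsCII)
    (h : T.halfOddParts = T'.halfOddParts) : T = T' := by
  refine ext (funext fun i => ?_)
  rcases Nat.even_or_odd i with hi | hi
  · exact hT.f_eq hT' hi
  by_cases hpart : i ∈ P.partsSet
  · have hodd : i ∈ P.oddParts := mem_filter.mpr ⟨hpart, hi⟩
    have := DFunLike.congr_fun h i
    rw [T.halfOddParts_apply hodd, T'.halfOddParts_apply hodd] at this
    obtain ⟨c, hc⟩ := (hT.2.2.2 i hi).2
    obtain ⟨c', hc'⟩ := (hT'.2.2.2 i hi).2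
    omega
  · rw [T.f_eq_zero hpart, T'.f_eq_zero hpart]

theorem exists_IsCII_halfOddParts_eq {N : ℕ} (hp : Even p) (hq : Even q)
    (hmult : ∀ i, Even (P.mult i)) (hbox : P.boxSum = p + q)
    (hN : (p : ℤ) - q + P.oddCount = 4 * N) {l : ℕ →₀ ℕ}
    (hl : l ∈ {l ∈ P.oddParts.finsuppAntidiag N | ∀ i ∈ P.oddParts, l i ≤ P.mult i / 2}) :
    ∃ T : SYD P p q, T.IsCII ∧ T.halfOddParts = l := by
  obtain ⟨hl, hle⟩ := mem_filter.mp hl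
  obtain ⟨hsum, hsupp⟩ := mem_finsuppAntidiag.mp hl
  have hout : ∀ i ∉ P.oddParts, l i = 0 := fun i hi =>
    Finsupp.notMem_support_iff.mp fun h => hi (hsupp h)
  let f : ℕ → ℕ := fun i => if Odd i then 2 * l i else P.mult i / 2
  have hf : ∀ i, f i ≤ P.mult i := by
    intro i
    by_cases hi : i ∈ P.oddParts
    · have := hle i hi
      simp only [f, if_pos (mem_filter.mp hi).2]
      omega
    · simp only [f]
      split_ifs
      · rw [hout i hi]; exact Nat.zero_le _
      · exact Nat.div_le_self _ _
  have hodd : (p : ℤ) - q + P.oddCount = 2 * ∑ i ∈ P.oddParts, (f i : ℤ) := by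
    rw [hN, ← hsum, Nat.cast_sum, mul_sum, mul_sum]
    refine sum_congr rfl fun i hi => ?_
    simp only [f, if_pos (mem_filter.mp hi).2]
    push_cast
    ring
  refine ⟨SYD.ofOddParts f hf hbox hodd, ⟨hp, hq, fun i hi => ?_, fun i hi => ?_⟩, ?_⟩
  · show 2 * f i = P.mult i
    simp only [f, if_neg (Nat.not_odd_iff_even.mpr hi)]
    exact Nat.two_mul_div_two_of_even (hmult i)
  · exact ⟨hmult i, by simp only [ofOddParts, f, if_pos hi]; exact even_two_mul _⟩
  · ext i
    by_cases hi : i ∈ P.oddParts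
    · rw [halfOddParts_apply _ hi]
      simp only [ofOddParts, f, if_pos (mem_filter.mp hi).2]
      omega
    · rw [hout i hi]
      exact if_neg hi

theorem card_IsCII {N : ℕ} (hp : Even p) (hq : Even q) (hmult : ∀ i, Even (P.mult i))
    (hbox : P.boxSum = p + q) (hN : (p : ℤ) - q + P.oddCount = 4 * N) :
    Nat.card {T : SYD P p q // T.IsCII} =
      #{l ∈ P.oddParts.finsuppAntidiag N | ∀ i ∈ P.oddParts, l i ≤ P.mult i / 2} := by
  rw [← Nat.card_eq_finsetCard]
  refine Nat.card_eq_of_bijective (fun T => ⟨T.1.halfOddParts, T.2.halfOddParts_mem hN⟩)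
    ⟨fun T T' h => Subtype.ext (T.2.eq_of_halfOddParts_eq T'.2 (congrArg Subtype.val h)),
      fun l => ?_⟩
  obtain ⟨T, hT, hTl⟩ := exists_IsCII_halfOddParts_eq hp hq hmult hbox hN l.2
  exact ⟨⟨T, hT⟩, Subtype.ext hTl⟩

end SYD

theorem orbitGraphX_IsCII_eq_bot {P : PartitionData} {p q : ℕ}
    (hdist : P.HasDistinctColumnLengths) :
    orbitGraphX P p q 2 SYD.IsCII = ⊥ := by
  ext T T'
  simp only [orbitGraphX, SimpleGraph.fromRel_adj, SimpleGraph.bot_adj, iff_false, not_and]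
  rintro - (h | h)
  · exact T.2.not_adjRel hdist T'.2 h
  · exact T'.2.not_adjRel hdist T.2 h

/-- Type CII: `p`, `q` even, every part of `λ` of even multiplicity, and `λ`
with distinct column lengths `0 = k_0 < k_1 < ⋯ < k_m`.  Each difference
`k_s - k_{s-1}` is even, and `d = (p - q + #(odd parts))/2` is an even
nonnegative integer whenever `syd_CII(λ;p,q) ≠ ∅`.  The graph `Γ_CII(λ;p,q)`
has no edges, so its number of connected components equals `#syd_CII(λ;p,q)`,
which is the coefficient of `t^{d/2}` in
`∏_{s : λ_{k_s} odd} (1 + t + ⋯ + t^{(k_s - k_{s-1})/2})`,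
the coefficient being `0` if `d/2` is not a nonnegative integer. -/
theorem stmt17 (P : PartitionData) (p q m : ℕ) (k : ℕ → ℕ)
    (hp : Even p) (hq : Even q)
    (hn : P.boxSum = p + q)
    (hmult : ∀ i, Even (P.mult i))
    (hdist : ∀ j, 1 ≤ j → P.l j - P.l (j + 1) ≤ 1)
    (hk0 : k 0 = 0) (hkmono : StrictMonoOn k (Set.Icc 0 m))
    (hkim : (Finset.Icc 1 m).image k = colSet P) :
    (∀ s, 1 ≤ s → s ≤ m → Even (k s - k (s - 1))) ∧
    (Nonempty {T : SYD P p q // T.IsCII} →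
      0 ≤ (p : ℤ) - (q : ℤ) + (P.oddCount : ℤ) ∧
        (4 : ℤ) ∣ ((p : ℤ) - (q : ℤ) + (P.oddCount : ℤ))) ∧
    orbitGraphX P p q 2 SYD.IsCII = ⊥ ∧
    Nat.card (orbitGraphX P p q 2 SYD.IsCII).ConnectedComponent =
      Nat.card {T : SYD P p q // T.IsCII} ∧
    (Nat.card {T : SYD P p q // T.IsCII} : ℤ) =
      (if 0 ≤ (p : ℤ) - (q : ℤ) + (P.oddCount : ℤ) ∧
          (4 : ℤ) ∣ ((p : ℤ) - (q : ℤ) + (P.oddCount : ℤ)) then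
        Polynomial.coeff
          (∏ s ∈ (Finset.Icc 1 m).filter (fun s => Odd (P.l (k s))),
            ∑ j ∈ Finset.range ((k s - k (s - 1)) / 2 + 1),
              (Polynomial.X : Polynomial ℤ) ^ j)
          ((((p : ℤ) - (q : ℤ) + (P.oddCount : ℤ)) / 4).toNat)
      else 0) := by
  have hk : IsColumnSeq P m k := ⟨hk0, hkmono, hkim⟩
  have hbot : orbitGraphX P p q 2 SYD.IsCII = ⊥ := orbitGraphX_IsCII_eq_bot hdist
  have hnonempty : Nonempty {T : SYD P p q // T.IsCII} →
      0 ≤ (p : ℤ) - q + P.oddCount ∧ 4 ∣ (p : ℤ) - q + P.oddCount := by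
    rintro ⟨T, hT⟩
    rw [hT.sub_add_oddCount]
    exact ⟨by positivity, dvd_mul_right _ _⟩
  refine ⟨fun s hs1 hsm => hk.mult_l_k (mem_Icc.mpr ⟨hs1, hsm⟩) ▸ hmult _, hnonempty, hbot,
    hbot ▸ SimpleGraph.card_connectedComponent_bot, ?_⟩
  split_ifs with hD
  · obtain ⟨N, hN⟩ : ∃ N : ℕ, (p : ℤ) - q + P.oddCount = 4 * N := by
      obtain ⟨c, hc⟩ := hD.2
      exact ⟨c.toNat, by omega⟩
    rw [hN, Int.mul_ediv_cancel_left _ four_ne_zero, Int.toNat_natCast,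
      hk.prod_oddParts fun _ μ =>
        ∑ j ∈ range (μ / 2 + 1), (Polynomial.X : Polynomial ℤ) ^ j,
      coeff_prod_sum_range_X_pow, SYD.card_IsCII hp hq hmult hn hN]
  · have : IsEmpty {T : SYD P p q // T.IsCII} := not_nonempty_iff.mp (hD ∘ hnonempty)
    rw [Nat.card_of_isEmpty, Nat.cast_zero]
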